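/- arXiv:2302.00949 — 2 statements merged into one kernel-verified Lean document; each statement's English description precedes it below -/
import Mathlib

section
/- Let c, α₁, C₀ be real constants with c ≠ 0 and C₀ ≠ 0, and set C(t) = C₀ (constant). On ℝ⁴ with coordinates (t,x,y,z), define the Bianchi I metric g = diag(−C₀², C₀²e^{−2t/c}, C₀²e^{−2α₁t/c}, C₀²). Then the vector field X₁ = (c, x, α₁y, 0) is a Killing vector of g: for all μ,ν and all points p, Σ_λ [ξ^λ(p)·∂_λ g_{μν}(p) + g_{λν}(p)·∂_μ ξ^λ(p) + g_{μλ}(p)·∂_ν ξ^λ(p)] = 0. -/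
noncomputable section

/-- Partial derivative of `f` in the `μ`-th coordinate direction at `p`. -/
def pd (μ : Fin 4) (f : (Fin 4 → ℝ) → ℝ) (p : Fin 4 → ℝ) : ℝ :=
  fderiv ℝ f p (Pi.single μ 1)

/-- `ξ` is a conformal Killing vector of the metric `g` with conformal factor `ψ`. -/
def IsCKV (g : (Fin 4 → ℝ) → Matrix (Fin 4) (Fin 4) ℝ)
    (ξ : (Fin 4 → ℝ) → Fin 4 → ℝ) (ψ : (Fin 4 → ℝ) → ℝ) : Prop :=
  ∀ (μ ν : Fin 4) (p : Fin 4 → ℝ),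
    (∑ l : Fin 4, (ξ p l * pd l (fun q => g q μ ν) p
      + g p l ν * pd μ (fun q => ξ q l) p
      + g p μ l * pd ν (fun q => ξ q l) p)) = 2 * ψ p * g p μ ν

/-- `ξ` is a Killing vector of the metric `g`. -/
def IsKV (g : (Fin 4 → ℝ) → Matrix (Fin 4) (Fin 4) ℝ)
    (ξ : (Fin 4 → ℝ) → Fin 4 → ℝ) : Prop :=
  ∀ (μ ν : Fin 4) (p : Fin 4 → ℝ),
    (∑ l : Fin 4, (ξ p l * pd l (fun q => g q μ ν) p
      + g p l ν * pd μ (fun q => ξ q l) p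
      + g p μ l * pd ν (fun q => ξ q l) p)) = 0

lemma pd_const' (μ : Fin 4) (k : ℝ) (p : Fin 4 → ℝ) : pd μ (fun _ => k) p = 0 := by
  simp [pd]

lemma pd_coord' (μ i : Fin 4) (p : Fin 4 → ℝ) :
    pd μ (fun q => q i) p = if i = μ then 1 else 0 := by
  rw [pd, (hasFDerivAt_apply (𝕜 := ℝ) i p).fderiv]
  simp [Pi.single_apply]

lemma pd_coord_mul' (μ i : Fin 4) (a : ℝ) (p : Fin 4 → ℝ) :
    pd μ (fun q => a * q i) p = if i = μ then a else 0 := by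
  rw [pd, ((hasFDerivAt_apply (𝕜 := ℝ) i p).const_mul a).fderiv]
  simp [Pi.single_apply]

lemma pd_mul_exp' (μ : Fin 4) (A B : ℝ) (p : Fin 4 → ℝ) :
    pd μ (fun q => A * Real.exp (B * q 0)) p
      = if (0 : Fin 4) = μ then A * B * Real.exp (B * p 0) else 0 := by
  have h := (((hasFDerivAt_apply (𝕜 := ℝ) 0 p).const_mul B).exp).const_mul A
  rw [pd, h.fderiv]
  simp [Pi.single_apply]
  split <;> ring

/-- with `C(t) = C₀` constant, the vector field `X₁ = c∂_t + x∂_x + α₁ y∂_y`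
is a Killing vector of the Bianchi I metric `diag(−C₀², C₀²e^{−2t/c}, C₀²e^{−2α₁t/c}, C₀²)`. -/
theorem bianchiI_X1_is_KV (c α₁ C₀ : ℝ) (hc : c ≠ 0) (hC₀ : C₀ ≠ 0)
    (g : (Fin 4 → ℝ) → Matrix (Fin 4) (Fin 4) ℝ)
    (hg : g = fun p => Matrix.diagonal
      ![-C₀ ^ 2,
        C₀ ^ 2 * Real.exp (-2 * p 0 / c),
        C₀ ^ 2 * Real.exp (-2 * α₁ * p 0 / c),
        C₀ ^ 2])
    (ξ : (Fin 4 → ℝ) → Fin 4 → ℝ)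
    (hξ : ξ = fun p => ![c, p 1, α₁ * p 2, 0]) :
    IsKV g ξ := by
  subst hg hξ
  have e1 : ∀ (μ : Fin 4) (p : Fin 4 → ℝ),
      pd μ (fun q : Fin 4 → ℝ => C₀ ^ 2 * Real.exp (-2 * q 0 / c)) p
      = if (0 : Fin 4) = μ then C₀ ^ 2 * (-2 / c) * Real.exp (-2 * p 0 / c) else 0 := by
    intro μ p
    have h : (fun q : Fin 4 → ℝ => C₀ ^ 2 * Real.exp (-2 * q 0 / c))
        = fun q => C₀ ^ 2 * Real.exp ((-2 / c) * q 0) := by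
      funext q; rw [show -2 * q 0 / c = -2 / c * q 0 by ring]
    rw [h, pd_mul_exp', show -2 / c * p 0 = -2 * p 0 / c by ring]
  have e2 : ∀ (μ : Fin 4) (p : Fin 4 → ℝ),
      pd μ (fun q : Fin 4 → ℝ => C₀ ^ 2 * Real.exp (-2 * α₁ * q 0 / c)) p
      = if (0 : Fin 4) = μ then C₀ ^ 2 * (-2 * α₁ / c) * Real.exp (-2 * α₁ * p 0 / c) else 0 := by
    intro μ p
    have h : (fun q : Fin 4 → ℝ => C₀ ^ 2 * Real.exp (-2 * α₁ * q 0 / c))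
        = fun q => C₀ ^ 2 * Real.exp ((-2 * α₁ / c) * q 0) := by
      funext q; rw [show -2 * α₁ * q 0 / c = -2 * α₁ / c * q 0 by ring]
    rw [h, pd_mul_exp', show -2 * α₁ / c * p 0 = -2 * α₁ * p 0 / c by ring]
  have hfin : ∀ μ : Fin 4, μ = 0 ∨ μ = 1 ∨ μ = 2 ∨ μ = 3 := by decide
  intro μ ν p
  rcases hfin μ with h | h | h | h <;> subst h <;>
    rcases hfin ν with h | h | h | h <;> subst h <;>
  · simp only [Fin.sum_univ_four, Matrix.diagonal_apply, Fin.reduceEq, reduceIte,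
      Matrix.cons_val_zero, Matrix.cons_val_one, Matrix.head_cons,
      Matrix.cons_val_two, Matrix.tail_cons, Matrix.cons_val_three,
      pd_const', pd_coord', pd_coord_mul', e1, e2]
    try field_simp
    try ring
end
end

section
/- Let m, λ be real constants with m ≠ 0 and let A : ℝ → ℝ be differentiable with A(t) ≠ 0 for all t. On ℝ⁴ with coordinates (t,x,y,z), define the Bianchi III metric g = diag(−A(t)²e^{mλt}, A(t)²e^{mλt}, A(t)²e^{m(λ−1)t}, A(t)²e^{−2x}). Then the vector field X₃ = (2/m, 0, y, λz) is a conformal Killing vector of g with conformal factor ψ(t,x,y,z) = (2/m)·A′(t)/A(t) + λ: for all μ,ν and all points p, Σ_λ' [ξ^{λ'}(p)·∂_{λ'} g_{μν}(p) + g_{λ'ν}(p)·∂_μ ξ^{λ'}(p) + g_{μλ'}(p)·∂_ν ξ^{λ'}(p)] = 2ψ(p)·g_{μν}(p). -/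
noncomputable section

/-!
The metric is `A(t)²` times a diagonal metric whose entries are `±exp (a_μ t + k_μ x)`, and `X₃`
has no `x`-component, a constant `t`-component `2/m` and the constant diagonal Jacobian
`diag (0, 0, 1, λ)`. Hence the off-diagonal equations are `0 = 0`, and the `μμ` equation,
divided by `g_μμ`, reads `(2/m) (2A'/A + a_μ) + 2 ∂_μ ξ^μ = 2ψ`. With `a = (mλ, mλ, m(λ-1), 0)`
the quantity `a_μ / m + ∂_μ ξ^μ` equals `λ` for every `μ`, which gives `ψ = (2/m) A'/A + λ`.
-/

open Matrix

theorem sum_mul_pd_eq_fderiv (f : (Fin 4 → ℝ) → ℝ) (v p : Fin 4 → ℝ) :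
    ∑ l, v l * pd l f p = fderiv ℝ f p v := by
  conv_rhs => rw [pi_eq_sum_univ' v]
  simp [pd, map_sum]

theorem pd_const_add_mul_apply (c d : ℝ) (μ ν : Fin 4) (p : Fin 4 → ℝ) :
    pd μ (fun q => c + d * q ν) p = if ν = μ then d else 0 := by
  have h := ((hasFDerivAt_apply (𝕜 := ℝ) (F' := fun _ => ℝ) ν p).const_mul d).const_add c
  rw [pd, h.fderiv]
  simp [Pi.single_apply]

theorem fderiv_mul_sq_mul_exp_apply {ι : Type*} [Fintype ι] {A : ℝ → ℝ} (i j : ι) {p : ι → ℝ}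
    (hA : DifferentiableAt ℝ A (p i)) (s a k : ℝ) (v : ι → ℝ) :
    fderiv ℝ (fun q => s * A (q i) ^ 2 * Real.exp (a * q i + k * q j)) p v =
      s * Real.exp (a * p i + k * p j) *
        ((2 * A (p i) * deriv A (p i) + a * A (p i) ^ 2) * v i + k * A (p i) ^ 2 * v j) := by
  have hproj (l : ι) :
      HasFDerivAt (fun q : ι → ℝ => q l) (ContinuousLinearMap.proj (R := ℝ) l) p :=
    hasFDerivAt_apply l p
  have hAi := hA.hasDerivAt.comp_hasFDerivAt p (hproj i)
  have hexp := (((hproj i).const_mul a).add ((hproj j).const_mul k)).exp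
  have h : HasFDerivAt (fun q => s * A (q i) ^ 2 * Real.exp (a * q i + k * q j)) _ p :=
    ((hAi.pow 2).const_mul s).mul hexp
  rw [h.fderiv]
  simp
  ring

theorem isCKV_diagonal (h : (Fin 4 → ℝ) → Fin 4 → ℝ) (ξ : (Fin 4 → ℝ) → Fin 4 → ℝ)
    (ψ : (Fin 4 → ℝ) → ℝ) (hξ : ∀ μ ν p, μ ≠ ν → pd μ (fun q => ξ q ν) p = 0)
    (hdiag : ∀ μ p, fderiv ℝ (fun q => h q μ) p (ξ p) + 2 * h p μ * pd μ (fun q => ξ q μ) p =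
      2 * ψ p * h p μ) :
    IsCKV (fun p => diagonal (h p)) ξ ψ := by
  intro μ ν p
  simp only [Finset.sum_add_distrib, diagonal_apply, ite_mul, mul_ite, zero_mul, mul_zero,
    Finset.sum_ite_eq, Finset.sum_ite_eq', Finset.mem_univ, if_true]
  rcases eq_or_ne μ ν with rfl | hμν
  · simpa [sum_mul_pd_eq_fderiv, two_mul, add_mul, add_assoc] using hdiag μ p
  · simp only [hμν, if_false, hξ _ _ _ hμν, hξ _ _ _ hμν.symm]
    simp [pd]

theorem isCKV_const_add_mul_of_diagonal_exp {A : ℝ → ℝ} (hA : Differentiable ℝ A)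
    (hA0 : ∀ t, A t ≠ 0) (s a k c d : Fin 4 → ℝ) (κ : ℝ) (hd0 : d 0 = 0) (hc1 : c 1 = 0)
    (hd1 : d 1 = 0) (hκ : ∀ μ, c 0 * a μ + 2 * d μ = 2 * κ) :
    IsCKV (fun p => diagonal fun μ => s μ * A (p 0) ^ 2 * Real.exp (a μ * p 0 + k μ * p 1))
      (fun p ν => c ν + d ν * p ν) (fun p => c 0 * deriv A (p 0) / A (p 0) + κ) := by
  refine isCKV_diagonal _ _ _ (fun μ ν p hμν => ?_) (fun μ p => ?_)
  · rw [pd_const_add_mul_apply, if_neg hμν.symm]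
  · rw [fderiv_mul_sq_mul_exp_apply 0 1 (hA _), pd_const_add_mul_apply, if_pos rfl]
    simp only [hd0, hc1, hd1, zero_mul, add_zero, mul_zero]
    field_simp [hA0 (p 0)]
    linear_combination s μ * A (p 0) * hκ μ

/-- the vector field `X₃ = (2/m)∂_t + y∂_y + λz∂_z` is a conformal Killing
vector of the Bianchi III metric `diag(−A²e^{mλt}, A²e^{mλt}, A²e^{m(λ−1)t}, A²e^{−2x})`
with conformal factor `ψ = (2/m) A′(t)/A(t) + λ`. -/
theorem bianchiIII_X3_is_CKV (m lam : ℝ) (hm : m ≠ 0)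
    (A : ℝ → ℝ) (hA : Differentiable ℝ A) (hA0 : ∀ t, A t ≠ 0)
    (g : (Fin 4 → ℝ) → Matrix (Fin 4) (Fin 4) ℝ)
    (hg : g = fun p => Matrix.diagonal
      ![-((A (p 0)) ^ 2 * Real.exp (m * lam * p 0)),
        (A (p 0)) ^ 2 * Real.exp (m * lam * p 0),
        (A (p 0)) ^ 2 * Real.exp (m * (lam - 1) * p 0),
        (A (p 0)) ^ 2 * Real.exp (-2 * p 1)])
    (ξ : (Fin 4 → ℝ) → Fin 4 → ℝ)
    (hξ : ξ = fun p => ![2 / m, 0, p 2, lam * p 3])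
    (ψ : (Fin 4 → ℝ) → ℝ)
    (hψ : ψ = fun p => (2 / m) * deriv A (p 0) / A (p 0) + lam) :
    IsCKV g ξ ψ := by
  subst hg hξ hψ
  have hκ : ∀ μ, ![2 / m, 0, 0, 0] 0 * ![m * lam, m * lam, m * (lam - 1), 0] μ
      + 2 * ![0, 0, 1, lam] μ = 2 * lam := by
    intro μ
    fin_cases μ <;> simp <;> field_simp; ring
  convert isCKV_const_add_mul_of_diagonal_exp hA hA0 ![-1, 1, 1, 1]
    ![m * lam, m * lam, m * (lam - 1), 0] ![0, 0, 0, -2] ![2 / m, 0, 0, 0] ![0, 0, 1, lam] lam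
    rfl rfl rfl hκ using 2 with p
  · congr 1
    ext μ
    fin_cases μ <;> simp
  · ext ν
    fin_cases ν <;> simp
  · rfl
end
end
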